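/- arXiv:1202.0861 — 5 statements merged into one kernel-verified Lean document; each statement's English description precedes it below -/
import Mathlib

section
/- Let α, β, A be positive reals with A > β + α, and let (x_n) be a sequence of nonnegative reals satisfying x_{n+1} = (α + β x_n + x_{n-1})/(A + x_{n-1}) for all n ≥ 1. If x_N ≤ (A − α)/β for some N ≥ 1, then x_{N+1} ≤ 1 < (A − α)/β. -/
theorem stmt_6 (α β A : ℝ) (hα : 0 < α) (hβ : 0 < β) (hA : 0 < A)
    (hAβα : A > β + α) (x : ℕ → ℝ) (hnn : ∀ n, 0 ≤ x n)
    (hrec : ∀ n ≥ 1, x (n + 1) = (α + β * x n + x (n - 1)) / (A + x (n - 1)))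
    (N : ℕ) (hN1 : 1 ≤ N) (hN : x N ≤ (A - α) / β) :
    x (N + 1) ≤ 1 ∧ (1 : ℝ) < (A - α) / β := by
  have hden : 0 < A + x (N - 1) := by linarith [hnn (N - 1)]
  have hβx : β * x N ≤ A - α := by
    have := (le_div_iff₀' hβ).mp hN
    linarith
  constructor
  · rw [hrec N hN1, div_le_one hden]
    linarith
  · rw [lt_div_iff₀ hβ]; linarith
end

section
/- Let α, γ be positive reals and let (x_n) be a sequence of positive reals satisfying x_n = (1/(x_{n-1} x_{n-2})) · (α + γ x_{n-1} x_{n-2})/(1 + x_{n-1}) for all n ≥ 2. Then for all n ≥ 4, x_n < x_{n-3} · (1/(α + γ² x_{n-3}/(1 + x_{n-3})) + 1/(γ x_{n-3})) · (α + γ x_{n-1} x_{n-2})/(1 + x_{n-1}). -/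
theorem stmt_13 (α γ : ℝ) (hα : 0 < α) (hγ : 0 < γ)
    (x : ℕ → ℝ) (hx : ∀ n, 0 < x n)
    (hrec : ∀ n ≥ 2, x n =
      (1 / (x (n - 1) * x (n - 2))) * ((α + γ * x (n - 1) * x (n - 2)) / (1 + x (n - 1)))) :
    ∀ n ≥ 4, x n < x (n - 3) *
      (1 / (α + γ ^ 2 * x (n - 3) / (1 + x (n - 3))) + 1 / (γ * x (n - 3))) *
      ((α + γ * x (n - 1) * x (n - 2)) / (1 + x (n - 1))) := by
  intro n hn
  obtain ⟨m, rfl⟩ : ∃ m, n = m + 4 := ⟨n - 4, by omega⟩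
  have h1 : m + 4 - 1 = m + 3 := by omega
  have h2 : m + 4 - 2 = m + 2 := by omega
  have h3 : m + 4 - 3 = m + 1 := by omega
  rw [h1, h2, h3]
  set a := x (m + 3) with ha'
  set b := x (m + 2) with hb'
  set c := x (m + 1) with hc'
  set d := x m with hd'
  have hapos : 0 < a := hx _
  have hbpos : 0 < b := hx _
  have hcpos : 0 < c := hx _
  have hdpos : 0 < d := hx _
  have hxeq := hrec (m + 4) (by omega)
  have haeq := hrec (m + 3) (by omega)
  have hbeq := hrec (m + 2) (by omega)
  simp only [show m + 4 - 1 = m + 3 from by omega, show m + 4 - 2 = m + 2 from by omega,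
    show m + 3 - 1 = m + 2 from by omega, show m + 3 - 2 = m + 1 from by omega,
    show m + 2 - 1 = m + 1 from by omega, show m + 2 - 2 = m from by omega,
    ← ha', ← hb', ← hc', ← hd'] at hxeq haeq hbeq
  -- b > γ / (1 + c)
  have hb_gt : b * (1 + c) > γ := by
    have : b = (α + γ * c * d) / (c * d * (1 + c)) := by
      rw [hbeq]; field_simp
    rw [gt_iff_lt, this, div_mul_eq_mul_div, lt_div_iff₀ (by positivity)]
    nlinarith [mul_pos (mul_pos hcpos hdpos) hcpos, mul_pos hcpos hdpos]
  -- a * b = (α + γ*b*c)/(c*(1+b))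
  have hab : a * b = (α + γ * b * c) / (c * (1 + b)) := by
    rw [haeq]; field_simp
  have habpos : 0 < a * b := mul_pos hapos hbpos
  have hd1 : 0 < α + γ * b * c := by positivity
  have hd2 : 0 < α + γ ^ 2 * c / (1 + c) := by positivity
  have hF : 0 < (α + γ * a * b) / (1 + a) := by positivity
  -- key inequality
  have key : 1 / (a * b) < c * (1 / (α + γ ^ 2 * c / (1 + c)) + 1 / (γ * c)) := by
    rw [hab, one_div, inv_div]
    have e1 : c * (1 + b) / (α + γ * b * c)
        = c / (α + γ * b * c) + c * b / (α + γ * b * c) := by ring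
    rw [e1]
    have t1 : c / (α + γ * b * c) < c / (α + γ ^ 2 * c / (1 + c)) := by
      apply div_lt_div_of_pos_left hcpos hd2
      have : γ ^ 2 * c / (1 + c) < γ * b * c := by
        rw [div_lt_iff₀ (by positivity)]
        nlinarith [mul_pos hγ hcpos]
      linarith
    have t2 : c * b / (α + γ * b * c) < c * (1 / (γ * c)) := by
      have : c * (1 / (γ * c)) = 1 / γ := by field_simp
      rw [this]
      rw [div_lt_div_iff₀ hd1 hγ]
      nlinarith [mul_pos hbpos hcpos]
    calc c / (α + γ * b * c) + c * b / (α + γ * b * c)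
        < c / (α + γ ^ 2 * c / (1 + c)) + c * (1 / (γ * c)) := by linarith
      _ = c * (1 / (α + γ ^ 2 * c / (1 + c)) + 1 / (γ * c)) := by ring
  calc x (m + 4) = 1 / (a * b) * ((α + γ * a * b) / (1 + a)) := hxeq
    _ < c * (1 / (α + γ ^ 2 * c / (1 + c)) + 1 / (γ * c)) * ((α + γ * a * b) / (1 + a)) :=
        by exact mul_lt_mul_of_pos_right key hF
end

section
/- Let α, γ be positive reals. Every sequence (x_n) of positive reals satisfying x_n = (1/(x_{n-1} x_{n-2})) · (α + γ x_{n-1} x_{n-2})/(1 + x_{n-1}) for all n ≥ 2 is bounded. -/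
private lemma Epos (α γ a b : ℝ) (hα : 0 < α) (hγ : 0 < γ) (hb : 0 < b)
    (ha : α/γ + γ + 1 ≤ a) :
    0 ≤ a*b*(α+γ*a*b)*(1+b) + (α+γ*a*b)^2 - α*a*b*(1+b)^2 - γ*b*(1+b)*(α+γ*a*b) := by
  have hga : α + γ^2 + γ ≤ γ*a := by
    have : γ * (α/γ + γ + 1) = α + γ^2 + γ := by field_simp
    nlinarith [mul_le_mul_of_nonneg_left ha hγ.le]
  have ha1 : 1 ≤ a := by
    have h1 : 0 < α/γ := by positivity
    linarith
  have t1 : 0 ≤ γ*a - α - γ^2 := by nlinarith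
  have t2 : 0 ≤ 2*a - 1 := by linarith
  have t3 : 0 ≤ γ*a^2 - α := by nlinarith [mul_le_mul_of_nonneg_left ha1 (mul_pos hγ (lt_of_lt_of_le one_pos ha1)).le]
  have key : a*b*(α+γ*a*b)*(1+b) + (α+γ*a*b)^2 - α*a*b*(1+b)^2 - γ*b*(1+b)*(α+γ*a*b)
      = a*b^2*(1+b)*(γ*a-α-γ^2) + α^2 + α*γ*b*(2*a-1) + γ*b^2*(γ*a^2-α) := by ring
  rw [key]
  have n1 : 0 ≤ a*b^2*(1+b)*(γ*a-α-γ^2) := by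
    apply mul_nonneg _ t1; positivity
  have n2 : 0 ≤ α*γ*b*(2*a-1) := by
    apply mul_nonneg _ t2; positivity
  have n3 : 0 ≤ γ*b^2*(γ*a^2-α) := by
    apply mul_nonneg _ t3; positivity
  nlinarith [sq_nonneg α]

private lemma step_lemma (α γ a b c d : ℝ) (hα : 0 < α) (hγ : 0 < γ)
    (ha : 0 < a) (hb : 0 < b) (hc : 0 < c) (hd : 0 < d)
    (h1 : c = (1/(b*a)) * ((α + γ*b*a)/(1+b)))
    (h2 : d = (1/(c*b)) * ((α + γ*c*b)/(1+c))) :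
    d ≤ max a (α/γ + 2*γ + 1) := by
  have hb1 : (0:ℝ) < 1 + b := by linarith
  have hc1 : (0:ℝ) < 1 + c := by linarith
  have hc' : c = (α + γ*a*b)/(a*b*(1+b)) := by
    rw [h1]; field_simp
  have hd1 : d * (b*c*(1+c)) = α + γ*c*b := by
    rw [h2]; field_simp
  by_cases hcase : α/γ + γ + 1 ≤ a
  · -- descent: d ≤ a
    have hE := Epos α γ a b hα hγ hb hcase
    have expand : a*(b*c*(1+c)) - (α + γ*c*b)
        = a*b*(a*b*(α+γ*a*b)*(1+b) + (α+γ*a*b)^2 - α*a*b*(1+b)^2 - γ*b*(1+b)*(α+γ*a*b))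
          / (a*b*(1+b))^2 := by
      rw [hc']; field_simp; ring
    have hpos : 0 ≤ a*(b*c*(1+c)) - (α + γ*c*b) := by
      rw [expand]
      apply div_nonneg _ (by positivity)
      exact mul_nonneg (by positivity) hE
    have hle : d * (b*c*(1+c)) ≤ a * (b*c*(1+c)) := by
      rw [hd1]; linarith
    have : d ≤ a := le_of_mul_le_mul_right hle (by positivity)
    exact le_max_of_le_left this
  · push_neg at hcase
    set K : ℝ := α/γ + γ + 1 with hK
    have hKpos : 0 < K := by positivity
    have hbc : b*c*(a*(1+b)) = α + γ*a*b := by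
      rw [hc']; field_simp
    have hαK : α ≤ K * γ := by
      have : K * γ = α + γ^2 + γ := by rw [hK]; field_simp
      nlinarith
    have h3 : α * (a*(1+b)) ≤ K * (α + γ*a*b) := by
      have e1 : α * a ≤ K * α := by nlinarith
      have e2 : α * (a*b) ≤ (K*γ) * (a*b) :=
        mul_le_mul_of_nonneg_right hαK (by positivity)
      nlinarith
    have h4 : α ≤ K * (b*c) := by
      rw [← hbc] at h3
      have h3' : α * (a*(1+b)) ≤ (K * (b*c)) * (a*(1+b)) := by ring_nf; ring_nf at h3; linarith
      exact le_of_mul_le_mul_right h3' (by positivity)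
    have h5 : d * (b*c) ≤ α + γ*c*b := by
      nlinarith [mul_pos (mul_pos hd (mul_pos hb hc)) hc]
    have h6 : d * (b*c) ≤ (K + γ) * (b*c) := by nlinarith
    have : d ≤ K + γ := le_of_mul_le_mul_right h6 (by positivity)
    apply le_max_of_le_right
    rw [hK] at this; linarith

theorem stmt_14 (α γ : ℝ) (hα : 0 < α) (hγ : 0 < γ)
    (x : ℕ → ℝ) (hx : ∀ n, 0 < x n)
    (hrec : ∀ n ≥ 2, x n =
      (1 / (x (n - 1) * x (n - 2))) * ((α + γ * x (n - 1) * x (n - 2)) / (1 + x (n - 1)))) :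
    ∃ M : ℝ, ∀ n, x n ≤ M := by
  set L : ℝ := α/γ + 2*γ + 1 with hL
  refine ⟨max (max (x 0) (max (x 1) (x 2))) L, ?_⟩
  intro n
  induction n using Nat.strong_induction_on with
  | _ n ih =>
    match n with
    | 0 => exact le_max_of_le_left (le_max_left _ _)
    | 1 => exact le_max_of_le_left (le_max_of_le_right (le_max_left _ _))
    | 2 => exact le_max_of_le_left (le_max_of_le_right (le_max_right _ _))
    | (k+3) =>
      have h1 := hrec (k+2) (by omega)
      have h2 := hrec (k+3) (by omega)
      have e1 : k + 2 - 1 = k + 1 := rfl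
      have e2 : k + 2 - 2 = k := rfl
      have e3 : k + 3 - 1 = k + 2 := rfl
      have e4 : k + 3 - 2 = k + 1 := rfl
      rw [e1, e2] at h1
      rw [e3, e4] at h2
      have hstep := step_lemma α γ (x k) (x (k+1)) (x (k+2)) (x (k+3)) hα hγ
        (hx k) (hx (k+1)) (hx (k+2)) (hx (k+3)) h1 h2
      have hxk : x k ≤ max (max (x 0) (max (x 1) (x 2))) L := ih k (by omega)
      have hLle : L ≤ max (max (x 0) (max (x 1) (x 2))) L := le_max_right _ _
      exact le_trans hstep (max_le hxk hLle)
end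

section
/- Let α, γ be positive reals and let (x_n), (y_n) be sequences of positive reals satisfying x_{n+1} = y_n/x_n and y_{n+1} = (α + γ y_n)/(x_n + y_n) for all n ≥ 0. Then both (x_n) and (y_n) are bounded. -/
set_option maxHeartbeats 1000000 in
/-- Key step: for four consecutive positive terms `u, v, w, z` of the reduced
equation `x_{n+2} (1 + x_{n+1}) = α / (x_n x_{n+1}) + γ`, we have
`z ≤ max u Q` for an explicit constant `Q` depending only on `α, γ`. -/
lemma key_step_8_30 (α γ u v w z : ℝ) (hα : 0 < α) (hγ : 0 < γ)
    (hu : 0 < u) (hv : 0 < v) (hw : 0 < w) (hz : 0 < z)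
    (e1 : w * (1 + v) = α / (u * v) + γ)
    (e2 : z * (1 + w) = α / (v * w) + γ) :
    z ≤ max u (2 * α / γ + γ + 4 * α / (γ * min γ (α / γ))) := by
  set m : ℝ := min γ (α / γ) with hmdef
  have hm : 0 < m := lt_min hγ (div_pos hα hγ)
  have hmγ : m ≤ γ := min_le_left _ _
  have hmα : m * γ ≤ α := by
    have h := min_le_right γ (α / γ)
    have h2 : (α / γ) * γ = α := by field_simp
    nlinarith
  have hQ1 : 0 < 2 * α / γ := by positivity
  have hQ4 : 0 < 4 * α / (γ * m) := by positivity
  have E1 : w * (1 + v) * (u * v) = α + γ * (u * v) := by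
    rw [e1]; field_simp
  have E2 : z * (1 + w) * (v * w) = α + γ * (v * w) := by
    rw [e2]; field_simp
  have hz' : z ≤ α / (v * w) + γ := by
    rw [← e2]; nlinarith [mul_pos hz hw]
  have hw1v : γ < w * (1 + v) := by nlinarith [mul_pos hu hv]
  rcases le_or_gt 1 v with hv1 | hv1
  · -- case A : v ≥ 1
    have h0 : (0:ℝ) ≤ (v - 1) * w := mul_nonneg (by linarith) hw.le
    have hvw : γ / 2 ≤ v * w := by nlinarith
    have hb : α / (v * w) ≤ 2 * α / γ := by
      rw [div_le_div_iff₀ (by positivity) (by positivity)]; nlinarith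
    exact le_max_of_le_right (by linarith)
  · rcases le_or_gt (v * (1 + v)) m with hvm | hvm
    · -- case C : z ≤ u
      have h5 : z * (1 + w) ≤ u * (1 + v) + γ := by
        nlinarith [mul_pos hu hv, mul_pos hv hw, E1, E2]
      have h7 : γ * (v * (1 + v)) ≤ α := by nlinarith
      have h6 : u * v + γ ≤ u * w := by
        nlinarith [mul_nonneg (mul_nonneg hu.le hv.le) (sub_nonneg.2 (hvm.trans hmγ)),
          mul_pos hv (by linarith : (0:ℝ) < 1 + v)]
      have : z ≤ u := by nlinarith
      exact le_max_of_le_left this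
    · -- case D
      have hvv : v * v ≤ v := by nlinarith
      have hv2 : m / 2 < v := by nlinarith
      have hw2 : γ / 2 < w := by nlinarith [mul_nonneg (by linarith : (0:ℝ) ≤ 1 - v) hw.le]
      have hvw : γ * m / 4 < v * w := by
        nlinarith [mul_pos (sub_pos.2 hv2) (sub_pos.2 hw2)]
      have hb : α / (v * w) ≤ 4 * α / (γ * m) := by
        rw [div_le_div_iff₀ (by positivity) (by positivity)]; nlinarith
      exact le_max_of_le_right (by linarith)

theorem stmt_15 (α γ : ℝ) (hα : 0 < α) (hγ : 0 < γ)
    (x y : ℕ → ℝ) (hx : ∀ n, 0 < x n) (hy : ∀ n, 0 < y n)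
    (h1 : ∀ n, x (n + 1) = y n / x n)
    (h2 : ∀ n, y (n + 1) = (α + γ * y n) / (x n + y n)) :
    (∃ M : ℝ, ∀ n, x n ≤ M) ∧ (∃ M : ℝ, ∀ n, y n ≤ M) := by
  -- y_n = x_{n+1} x_n
  have hyx : ∀ n, y n = x (n + 1) * x n := by
    intro n
    rw [h1 n, div_mul_cancel₀ _ (hx n).ne']
  -- the reduced equation
  have key : ∀ n, x (n + 2) * (1 + x (n + 1)) = α / (x n * x (n + 1)) + γ := by
    intro n
    have hxn := hx n
    have hxn1 := hx (n + 1)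
    rw [show n + 2 = (n + 1) + 1 from rfl, h1 (n + 1), h2 n, hyx n]
    have hd : x n + x (n + 1) * x n ≠ 0 := by positivity
    field_simp
  set Q : ℝ := 2 * α / γ + γ + 4 * α / (γ * min γ (α / γ)) with hQdef
  have step : ∀ n, x (n + 3) ≤ max (x n) Q := by
    intro n
    exact key_step_8_30 α γ (x n) (x (n + 1)) (x (n + 2)) (x (n + 3)) hα hγ
      (hx n) (hx (n + 1)) (hx (n + 2)) (hx (n + 3)) (key n) (key (n + 1))
  set M : ℝ := max (max (x 0) (max (x 1) (x 2))) Q with hMdef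
  have hM : ∀ n, x n ≤ M := by
    intro n
    induction n using Nat.strong_induction_on with
    | _ n ih =>
      match n, ih with
      | 0, _ => exact le_max_of_le_left (le_max_left _ _)
      | 1, _ => exact le_max_of_le_left (le_max_of_le_right (le_max_left _ _))
      | 2, _ => exact le_max_of_le_left (le_max_of_le_right (le_max_right _ _))
      | (k + 3), ih =>
        exact (step k).trans (max_le (ih k (by omega)) (le_max_right _ _))
  have hM0 : 0 ≤ M := le_trans (hx 0).le (le_max_of_le_left (le_max_left _ _))
  refine ⟨⟨M, hM⟩, ⟨M * M, fun n => ?_⟩⟩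
  rw [hyx n]
  exact mul_le_mul (hM _) (hM _) (hx n).le hM0
end

section
/- Let α, β, A be positive reals with A > α and A ≤ α + β, and let (x_n) be a sequence of nonnegative reals satisfying x_{n+1} = (α + β x_n + x_{n-1})/(A + x_{n-1}) for all n ≥ 1. Then either x_n → 1, or there exists N with x_n ≥ 1 for all n ≥ N. -/
theorem stmt_18 (α β A : ℝ) (hα : 0 < α) (hβ : 0 < β) (hA : 0 < A)
    (hAα : A > α) (hAαβ : A ≤ α + β)
    (x : ℕ → ℝ) (hnn : ∀ n, 0 ≤ x n)
    (hrec : ∀ n ≥ 1, x (n + 1) = (α + β * x n + x (n - 1)) / (A + x (n - 1))) :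
    Filter.Tendsto x Filter.atTop (nhds 1) ∨ ∃ N, ∀ n ≥ N, 1 ≤ x n := by
  have hrec' : ∀ m : ℕ, x (m + 2) = (α + β * x (m + 1) + x m) / (A + x m) := by
    intro m
    have h := hrec (m + 1) (by omega)
    simpa using h
  have hden : ∀ m : ℕ, 0 < A + x m := fun m => by have := hnn m; linarith
  by_cases h : ∃ n ≥ 1, 1 ≤ x n
  · right
    obtain ⟨n, hn1, hxn⟩ := h
    refine ⟨n, ?_⟩
    intro m hm
    induction m, hm using Nat.le_induction with
    | base => exact hxn
    | succ m hm ih =>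
      obtain ⟨k, rfl⟩ : ∃ k, m = k + 1 := ⟨m - 1, by omega⟩
      rw [hrec' k, le_div_iff₀ (hden k)]
      have := hnn k
      nlinarith
  · push_neg at h
    left
    have hlt : ∀ n, 1 ≤ n → x n < 1 := h
    have key : ∀ m : ℕ, α + β * x (m + 1) ≤ A * x (m + 2) := by
      intro m
      have he := hrec' m
      have hd := hden m
      have hx2 : x (m + 2) < 1 := hlt _ (by omega)
      have hmul : x (m + 2) * (A + x m) = α + β * x (m + 1) + x m := by
        rw [he]; field_simp
      have := hnn m
      nlinarith
    by_cases hβA : A ≤ β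
    · exfalso
      have grow : ∀ k : ℕ, A * x 1 + k * α ≤ A * x (k + 1) := by
        intro k
        induction k with
        | zero => simp
        | succ k ih =>
          have hk := key k
          have hxk := hnn (k + 1)
          have hAβ : A * x (k + 1) ≤ β * x (k + 1) := by nlinarith
          push_cast
          push_cast at ih
          nlinarith
      obtain ⟨k, hk⟩ := exists_nat_gt (A / α)
      have hkα : A < k * α := by
        rw [div_lt_iff₀ hα] at hk; linarith
      have h1 := grow k
      have h2 := hlt (k + 1) (by omega)
      have h3 := hnn 1
      nlinarith
    · push_neg at hβA
      set r := β / A with hr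
      have hr0 : 0 ≤ r := by positivity
      have hr1 : r < 1 := (div_lt_one hA).mpr hβA
      have bound : ∀ k : ℕ, 1 - x (k + 1) ≤ r ^ k * (1 - x 1) := by
        intro k
        induction k with
        | zero => simp
        | succ k ih =>
          have hk := key k
          have hstep : A * (1 - x (k + 2)) ≤ β * (1 - x (k + 1)) := by nlinarith
          have h1 : 1 - x (k + 2) ≤ r * (1 - x (k + 1)) := by
            rw [hr, div_mul_eq_mul_div, le_div_iff₀ hA]
            linarith
          calc 1 - x (k + 2) ≤ r * (1 - x (k + 1)) := h1
            _ ≤ r * (r ^ k * (1 - x 1)) := mul_le_mul_of_nonneg_left ih hr0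
            _ = r ^ (k + 1) * (1 - x 1) := by ring
      have hpos : ∀ k : ℕ, 0 ≤ 1 - x (k + 1) := fun k => by
        have := hlt (k + 1) (by omega); linarith
      have htends0 : Filter.Tendsto (fun k : ℕ => 1 - x (k + 1)) Filter.atTop (nhds 0) := by
        have hgeo : Filter.Tendsto (fun k : ℕ => r ^ k * (1 - x 1)) Filter.atTop (nhds 0) := by
          have := tendsto_pow_atTop_nhds_zero_of_lt_one hr0 hr1
          simpa using this.mul_const (1 - x 1)
        exact tendsto_of_tendsto_of_tendsto_of_le_of_le tendsto_const_nhds hgeo hpos bound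
      have hsh : Filter.Tendsto (fun k : ℕ => x (k + 1)) Filter.atTop (nhds 1) := by
        have h2 := htends0.const_sub 1
        simpa using h2
      exact (Filter.tendsto_add_atTop_iff_nat 1).mp hsh
end
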